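/- arXiv:quant-ph/0105104 — 2 statements merged into one kernel-verified Lean document; each statement's English description precedes it below -/
import Mathlib

section
/- If ψ₁ and ψ₂ are Schmidt orthogonal unit vectors in H₁ ⊗ H₂, then any linear combination λ₁ψ₁ + λ₂ψ₂ with |λ₁|² + |λ₂|² = 1 is a unit vector whose set of nonzero Schmidt coefficients is {|λ₁|² p : p nonzero Schmidt coefficient of ψ₁} ∪ {|λ₂|² q : q nonzero Schmidt coefficient of ψ₂} (counted with multiplicity). -/
open scoped BigOperators ComplexOrder
open Matrix

noncomputable section

/-- Finite-dimensional complex Hilbert space of dimension `m`. -/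
abbrev H (m : ℕ) := EuclideanSpace ℂ (Fin m)

/-- The tensor product `H m ⊗ H n`, realized as `EuclideanSpace ℂ (Fin m × Fin n)`. -/
abbrev HT (m n : ℕ) := EuclideanSpace ℂ (Fin m × Fin n)

/-- Elementary tensor `a ⊗ b`. -/
def tensorVec {m n : ℕ} (a : H m) (b : H n) : HT m n :=
  WithLp.toLp 2 (fun p => a p.1 * b p.2)

/-- The projection `|ψ⟩⟨ψ|` as a matrix. -/
def proj {m n : ℕ} (ψ : HT m n) : Matrix (Fin m × Fin n) (Fin m × Fin n) ℂ :=
  Matrix.of fun x y => ψ x * (starRingEnd ℂ) (ψ y)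

/-- The projection `|a⟩⟨a|` on a single factor. -/
def proj1 {m : ℕ} (a : H m) : Matrix (Fin m) (Fin m) ℂ :=
  Matrix.of fun i j => a i * (starRingEnd ℂ) (a j)

/-- Partial trace over the second factor. -/
def ptrace2 {m n : ℕ} (M : Matrix (Fin m × Fin n) (Fin m × Fin n) ℂ) :
    Matrix (Fin m) (Fin m) ℂ :=
  Matrix.of fun i j => ∑ k : Fin n, M (i, k) (j, k)

/-- Partial trace over the first factor. -/
def ptrace1 {m n : ℕ} (M : Matrix (Fin m × Fin n) (Fin m × Fin n) ℂ) :
    Matrix (Fin n) (Fin n) ℂ :=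
  Matrix.of fun i j => ∑ k : Fin m, M (k, i) (k, j)

/-- Von Neumann entropy `-Tr(ρ ln ρ)` of a Hermitian matrix, via its eigenvalues. -/
def vnEnt {k : ℕ} {M : Matrix (Fin k) (Fin k) ℂ} (h : M.IsHermitian) : ℝ :=
  ∑ i, Real.negMulLog (h.eigenvalues i)

/-- Kronecker product of square matrices. -/
def kron {m n : ℕ} (A : Matrix (Fin m) (Fin m) ℂ) (B : Matrix (Fin n) (Fin n) ℂ) :
    Matrix (Fin m × Fin n) (Fin m × Fin n) ℂ :=
  Matrix.of fun p q => A p.1 q.1 * B p.2 q.2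

/-- Action of a matrix on a vector. -/
def matVec {m n : ℕ} (M : Matrix (Fin m × Fin n) (Fin m × Fin n) ℂ) (ψ : HT m n) :
    HT m n := WithLp.toLp 2 (fun p => ∑ q, M p q * ψ q)

/-- The canonical pure state with Schmidt coefficients `μ`. -/
def stdVec {k : ℕ} (μ : Fin k → ℝ) : HT k k :=
  WithLp.toLp 2 (fun p => if p.1 = p.2 then (Real.sqrt (μ p.1) : ℂ) else 0)

/-- Strong Schmidt orthogonality: the supports of both reduced density matrices
are orthogonal. -/
def SchmidtOrthogonal {m n : ℕ} (ψ φ : HT m n) : Prop :=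
  ptrace2 (proj ψ) * ptrace2 (proj φ) = 0 ∧ ptrace1 (proj ψ) * ptrace1 (proj φ) = 0

/-- Image of `ψ` under the tensor product of two isometric embeddings. -/
def tensorMap {m n m' n' : ℕ} (f : H m →ₗᵢ[ℂ] H m') (g : H n →ₗᵢ[ℂ] H n')
    (ψ : HT m n) : HT m' n' :=
  WithLp.toLp 2 (fun p => ∑ q : Fin m × Fin n,
    ψ q * f (EuclideanSpace.single q.1 1) p.1 * g (EuclideanSpace.single q.2 1) p.2)

/-- Finite probability distribution. -/
def IsProbDist {k : ℕ} (p : Fin k → ℝ) : Prop := (∀ i, 0 ≤ p i) ∧ ∑ i, p i = 1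

/-- Multiset of nonzero Schmidt coefficients of `ψ` (eigenvalues of the reduced
density matrix). -/
def schmidtMultiset {m n : ℕ} (ψ : HT m n) (h : (ptrace2 (proj ψ)).IsHermitian) :
    Multiset ℝ :=
  (Finset.univ.val.map h.eigenvalues).filter (· ≠ 0)

/-- Trace norm of a matrix. -/
def trNorm {a b : ℕ} (A : Matrix (Fin a) (Fin b) ℂ) : ℝ :=
  ∑ i, Real.sqrt ((Matrix.posSemidef_conjTranspose_mul_self A).1.eigenvalues i)

/-- The greatest cross norm. -/
def gcn {m n : ℕ} (M : Matrix (Fin m × Fin n) (Fin m × Fin n) ℂ) : ℝ :=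
  sInf { t : ℝ | ∃ (k : ℕ) (x : Fin k → Matrix (Fin m) (Fin m) ℂ)
    (y : Fin k → Matrix (Fin n) (Fin n) ℂ),
    M = ∑ i, kron (x i) (y i) ∧ t = ∑ i, trNorm (x i) * trNorm (y i) }

/-- Density operator. -/
def IsDensity {d : Type*} [Fintype d] [DecidableEq d] (M : Matrix d d ℂ) : Prop :=
  M.PosSemidef ∧ M.trace = 1

/-! Put `E = a ⊕ c`, `F = b ⊕ d`. The superposition is `∑ₛ cₛ • E s ⊗ F s` with `|cₛ|²` running
through the `|λ₁|² pᵢ` and `|λ₂|² qⱼ`, and since both joint families are orthonormal this is a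
single Schmidt decomposition. Its reduced density matrix is `A D Aᴴ`, where `A` is the isometry
with columns `E s` and `D = diag |cₛ|²`; from `Xᵏ χ(A D Aᴴ) = Xᵐ χ(D Aᴴ A) = Xᵐ χ(D)` its nonzero
eigenvalues are exactly the nonzero `|cₛ|²`. -/

theorem Orthonormal.norm_sum_smul_sq {𝕜 E ι : Type*} [RCLike 𝕜] [NormedAddCommGroup E]
    [InnerProductSpace 𝕜 E] [Fintype ι] {v : ι → E} (hv : Orthonormal 𝕜 v) (c : ι → 𝕜) :
    ‖∑ s, c s • v s‖ ^ 2 = ∑ s, ‖c s‖ ^ 2 := by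
  have h := hv.inner_sum c c Finset.univ
  rw [inner_self_eq_norm_sq_to_K] at h
  simp_rw [RCLike.conj_mul] at h
  exact_mod_cast h

open Polynomial in
theorem Matrix.IsHermitian.filter_ne_zero_eigenvalues_eq_of_isometry
    {𝕜 n ι : Type*} [RCLike 𝕜] [Fintype n] [DecidableEq n] [Fintype ι] [DecidableEq ι]
    {M : Matrix n n 𝕜} (hM : M.IsHermitian) {A : Matrix n ι 𝕜} (hA : Aᴴ * A = 1)
    (μ : ι → ℝ) (hMA : M = A * diagonal (fun s => (μ s : 𝕜)) * Aᴴ) :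
    (Finset.univ.val.map hM.eigenvalues).filter (· ≠ 0)
      = (Finset.univ.val.map μ).filter (· ≠ 0) := by
  have hchar : X ^ Fintype.card ι * M.charpoly
      = X ^ Fintype.card n * ∏ s, (X - C (μ s : 𝕜)) := by
    rw [hMA, Matrix.mul_assoc, charpoly_mul_comm', Matrix.mul_assoc, hA, mul_one,
      charpoly_diagonal]
  have hmonic : (∏ s, (X - C (μ s : 𝕜))).Monic := monic_prod_of_monic _ _ fun s _ => monic_X_sub_C _
  have hroots := congrArg roots hchar
  rw [roots_mul ((monic_X_pow _).mul M.charpoly_monic).ne_zero,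
    roots_mul ((monic_X_pow _).mul hmonic).ne_zero, roots_X_pow, roots_X_pow,
    hM.roots_charpoly_eq_eigenvalues, roots_prod _ _ hmonic.ne_zero] at hroots
  simp only [roots_X_sub_C, Multiset.bind_singleton] at hroots
  have hreal : Fintype.card ι • {0} + Finset.univ.val.map hM.eigenvalues
      = Fintype.card n • {0} + Finset.univ.val.map μ := by
    refine Multiset.map_injective (RCLike.ofReal_injective (K := 𝕜)) ?_
    simpa [Multiset.map_nsmul, Multiset.map_map] using hroots
  simpa [Multiset.filter_add, Multiset.filter_nsmul, Multiset.filter_singleton]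
    using congrArg (Multiset.filter (· ≠ 0)) hreal

section

variable {m n : ℕ} {ι : Type*}

theorem inner_tensorVec (a c : H m) (b d : H n) :
    inner ℂ (tensorVec a b) (tensorVec c d) = inner ℂ a c * inner ℂ b d := by
  simp only [tensorVec, PiLp.inner_apply, RCLike.inner_apply, Fintype.sum_prod_type,
    Finset.sum_mul_sum, map_mul]
  exact Finset.sum_congr rfl fun i _ => Finset.sum_congr rfl fun k _ => by ring

theorem Orthonormal.tensorVec {E : ι → H m} {F : ι → H n}
    (hE : Orthonormal ℂ E) (hF : Orthonormal ℂ F) :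
    Orthonormal ℂ fun s => tensorVec (E s) (F s) := by
  classical
  rw [orthonormal_iff_ite] at hE hF ⊢
  intro s t
  rw [inner_tensorVec, hE, hF]
  split_ifs <;> simp

theorem norm_sum_sqrt_smul_tensorVec_sq {k : ℕ} {E : Fin k → H m} {F : Fin k → H n}
    (hE : Orthonormal ℂ E) (hF : Orthonormal ℂ F) {p : Fin k → ℝ} (hp : ∀ i, 0 ≤ p i) :
    ‖∑ i, (Real.sqrt (p i) : ℂ) • tensorVec (E i) (F i)‖ ^ 2 = ∑ i, p i := by
  rw [(hE.tensorVec hF).norm_sum_smul_sq]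
  exact Finset.sum_congr rfl fun i _ => by
    rw [Complex.norm_real, Real.norm_of_nonneg (Real.sqrt_nonneg _), Real.sq_sqrt (hp i)]

theorem ptrace2_proj_sum_smul_tensorVec [Fintype ι] (c : ι → ℂ) (E : ι → H m) {F : ι → H n}
    (hF : Orthonormal ℂ F) :
    ptrace2 (proj (∑ s, c s • tensorVec (E s) (F s)))
      = ∑ s, ((‖c s‖ : ℂ) ^ 2) • proj1 (E s) := by
  classical
  ext i j
  have hF' : ∀ s t, ∑ k, F s k * starRingEnd ℂ (F t k) = if t = s then 1 else 0 := by
    intro s t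
    rw [← orthonormal_iff_ite.mp hF t s, PiLp.inner_apply]
    exact Finset.sum_congr rfl fun k _ => by rw [RCLike.inner_apply, mul_comm]
  calc ptrace2 (proj (∑ s, c s • tensorVec (E s) (F s))) i j
      = ∑ s, ∑ t, c s * starRingEnd ℂ (c t) * (E s i * starRingEnd ℂ (E t j))
          * ∑ k, F s k * starRingEnd ℂ (F t k) := by
        simp only [ptrace2, proj, tensorVec, Matrix.of_apply, WithLp.ofLp_sum, WithLp.ofLp_smul,
          Finset.sum_apply, Pi.smul_apply, smul_eq_mul, map_sum, map_mul]
        simp_rw [Finset.sum_mul_sum, Finset.mul_sum]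
        rw [Finset.sum_comm]
        refine Finset.sum_congr rfl fun s _ => ?_
        rw [Finset.sum_comm]
        exact Finset.sum_congr rfl fun t _ => Finset.sum_congr rfl fun k _ => by ring
    _ = ∑ s, c s * starRingEnd ℂ (c s) * (E s i * starRingEnd ℂ (E s j)) := by
        simp only [hF', mul_ite, mul_one, mul_zero, Finset.sum_ite_eq', Finset.mem_univ, if_true]
    _ = _ := by
        simp only [Complex.mul_conj', Matrix.sum_apply, Matrix.smul_apply, proj1,
          Matrix.of_apply, smul_eq_mul]

def colMatrix (E : ι → H m) : Matrix (Fin m) ι ℂ :=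
  Matrix.of fun i s => E s i

theorem conjTranspose_colMatrix_mul_self [Fintype ι] [DecidableEq ι] {E : ι → H m}
    (hE : Orthonormal ℂ E) : (colMatrix E)ᴴ * colMatrix E = 1 := by
  ext s t
  rw [Matrix.mul_apply, Matrix.one_apply, ← orthonormal_iff_ite.mp hE s t, PiLp.inner_apply]
  simp only [colMatrix, Matrix.conjTranspose_apply, Matrix.of_apply, RCLike.inner_apply,
    RCLike.star_def, mul_comm]

theorem sum_smul_proj1_eq_colMatrix_mul_diagonal [Fintype ι] [DecidableEq ι]
    (E : ι → H m) (d : ι → ℂ) :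
    ∑ s, d s • proj1 (E s) = colMatrix E * diagonal d * (colMatrix E)ᴴ := by
  ext i j
  rw [Matrix.mul_apply]
  simp only [Matrix.sum_apply, Matrix.smul_apply, proj1, colMatrix, Matrix.mul_diagonal,
    Matrix.conjTranspose_apply, Matrix.of_apply, smul_eq_mul, RCLike.star_def]
  exact Finset.sum_congr rfl fun s _ => by ring

end

/-- A superposition `λ₁ψ₁ + λ₂ψ₂` of Schmidt orthogonal unit vectors is a unit
vector whose multiset of nonzero Schmidt coefficients is the union of the
rescaled multisets `|λ₁|²·pᵢ` and `|λ₂|²·qⱼ` (with multiplicity). -/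
theorem schmidt_coefficients_of_superposition {m n k₁ k₂ : ℕ}
    (ψ₁ ψ₂ : HT m n) (hψ₁ : ‖ψ₁‖ = 1) (hψ₂ : ‖ψ₂‖ = 1)
    (p : Fin k₁ → ℝ) (q : Fin k₂ → ℝ) (hp : ∀ i, 0 ≤ p i) (hq : ∀ j, 0 ≤ q j)
    (a : Fin k₁ → H m) (c : Fin k₂ → H m) (b : Fin k₁ → H n) (d : Fin k₂ → H n)
    (hac : Orthonormal ℂ (Sum.elim a c)) (hbd : Orthonormal ℂ (Sum.elim b d))
    (hdec₁ : ψ₁ = ∑ i, (Real.sqrt (p i) : ℂ) • tensorVec (a i) (b i))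
    (hdec₂ : ψ₂ = ∑ j, (Real.sqrt (q j) : ℂ) • tensorVec (c j) (d j))
    (l₁ l₂ : ℂ) (hl : ‖l₁‖ ^ 2 + ‖l₂‖ ^ 2 = 1)
    (h : (ptrace2 (proj (l₁ • ψ₁ + l₂ • ψ₂))).IsHermitian) :
    ‖l₁ • ψ₁ + l₂ • ψ₂‖ = 1 ∧
    schmidtMultiset (l₁ • ψ₁ + l₂ • ψ₂) h
      = ((Finset.univ.val.map fun i => ‖l₁‖ ^ 2 * p i)
          + (Finset.univ.val.map fun j => ‖l₂‖ ^ 2 * q j)).filter (· ≠ 0) := by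
  set μ : Fin k₁ ⊕ Fin k₂ → ℝ := Sum.elim (fun i => ‖l₁‖ ^ 2 * p i) (fun j => ‖l₂‖ ^ 2 * q j)
  set coeff : Fin k₁ ⊕ Fin k₂ → ℂ :=
    Sum.elim (fun i => l₁ * Real.sqrt (p i)) (fun j => l₂ * Real.sqrt (q j))
  have hcoeff : ∀ s, ‖coeff s‖ ^ 2 = μ s := by
    rintro (i | j) <;> simp [coeff, μ, mul_pow, hp, hq]
  have hψ : l₁ • ψ₁ + l₂ • ψ₂
      = ∑ s, coeff s • tensorVec (Sum.elim a c s) (Sum.elim b d s) := by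
    simp only [hdec₁, hdec₂, Fintype.sum_sum_type, Finset.smul_sum, smul_smul, coeff,
      Sum.elim_inl, Sum.elim_inr]
  have hp₁ : ∑ i, p i = 1 := by
    rw [← norm_sum_sqrt_smul_tensorVec_sq (E := a) (F := b) (hac.comp Sum.inl Sum.inl_injective)
      (hbd.comp Sum.inl Sum.inl_injective) hp, ← hdec₁, hψ₁, one_pow]
  have hq₁ : ∑ j, q j = 1 := by
    rw [← norm_sum_sqrt_smul_tensorVec_sq (E := c) (F := d) (hac.comp Sum.inr Sum.inr_injective)
      (hbd.comp Sum.inr Sum.inr_injective) hq, ← hdec₂, hψ₂, one_pow]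
  have hnorm : ‖l₁ • ψ₁ + l₂ • ψ₂‖ ^ 2 = 1 := by
    rw [hψ, (hac.tensorVec hbd).norm_sum_smul_sq]
    simp [hcoeff, μ, Fintype.sum_sum_type, ← Finset.mul_sum, hp₁, hq₁, hl]
  have hρ : ptrace2 (proj (l₁ • ψ₁ + l₂ • ψ₂))
      = colMatrix (Sum.elim a c) * diagonal (fun s => (μ s : ℂ)) * (colMatrix (Sum.elim a c))ᴴ := by
    rw [hψ, ptrace2_proj_sum_smul_tensorVec _ _ hbd, ← sum_smul_proj1_eq_colMatrix_mul_diagonal]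
    simp [← hcoeff]
  refine ⟨(pow_eq_one_iff_of_nonneg (norm_nonneg _) two_ne_zero).mp hnorm, ?_⟩
  rw [schmidtMultiset, h.filter_ne_zero_eigenvalues_eq_of_isometry
    (conjTranspose_colMatrix_mul_self hac) μ hρ, ← Finset.univ_disjSum_univ, Finset.val_disjSum,
    Multiset.map_disjSum]
  rfl

end
end

section
/- Let E be an entanglement measure on mixed states satisfying (M1)–(M5). Then E(ρ) = 0 for every separable density operator ρ on H₁ ⊗ H₂. -/
open scoped BigOperators ComplexOrder
open Matrix

noncomputable section

/-- Kronecker product of rectangular matrices. -/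
def kronR {m m' n n' : ℕ} (A : Matrix (Fin m') (Fin m) ℂ) (B : Matrix (Fin n') (Fin n) ℂ) :
    Matrix (Fin m' × Fin n') (Fin m × Fin n) ℂ :=
  Matrix.of fun p q => A p.1 q.1 * B p.2 q.2

/-- Separability of a density operator. -/
def SepDensity {m n : ℕ} (ρ : Matrix (Fin m × Fin n) (Fin m × Fin n) ℂ) : Prop :=
  ∃ (k : ℕ) (ω : Fin k → ℝ) (ρ₁ : Fin k → Matrix (Fin m) (Fin m) ℂ)
    (ρ₂ : Fin k → Matrix (Fin n) (Fin n) ℂ),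
    (∀ i, 0 ≤ ω i) ∧ (∀ i, IsDensity (ρ₁ i)) ∧ (∀ i, IsDensity (ρ₂ i)) ∧
    ρ = ∑ i, (ω i : ℂ) • kron (ρ₁ i) (ρ₂ i)

/-! A single-term superposition in (M4) gives `E(P) = E(P) + E(P)` for the pure state `P` of
`ℂ¹ ⊗ ℂ¹`, so `E(P) = 0`. Every product pure state `|a⟩⟨a| ⊗ |b⟩⟨b|` is the image of `P` under
the isometric embedding `1 ↦ a ⊗ b`, so `E` vanishes on it by (M3). Spectrally decomposing the
factors exhibits a separable density operator as a convex combination of product pure states,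
so by the maximum principle for the convex function `E` (M5) we get `E ρ ≤ 0`, while `E ρ ≥ 0`
by (M1). -/

theorem LinearMap.mem_convexHull_image2 {𝕜 E F G : Type*} [CommSemiring 𝕜] [PartialOrder 𝕜]
    [AddCommMonoid E] [AddCommMonoid F] [AddCommMonoid G] [Module 𝕜 E] [Module 𝕜 F] [Module 𝕜 G]
    (f : E →ₗ[𝕜] F →ₗ[𝕜] G) {s : Set E} {t : Set F} {x : E} {y : F}
    (hx : x ∈ convexHull 𝕜 s) (hy : y ∈ convexHull 𝕜 t) :
    f x y ∈ convexHull 𝕜 (Set.image2 (fun a b => f a b) s t) := by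
  have hleft : ∀ b ∈ t, f x b ∈ convexHull 𝕜 (Set.image2 (fun a b => f a b) s t) := by
    intro b hb
    have : f.flip b x ∈ convexHull 𝕜 (f.flip b '' s) :=
      (f.flip b).image_convexHull s ▸ Set.mem_image_of_mem _ hx
    have hsub : f.flip b '' s ⊆ Set.image2 (fun a b => f a b) s t := by
      rintro _ ⟨a, ha, rfl⟩
      exact Set.mem_image2_of_mem ha hb
    exact convexHull_mono hsub this
  have : f x y ∈ convexHull 𝕜 (f x '' t) := (f x).image_convexHull t ▸ Set.mem_image_of_mem _ hy
  exact convexHull_min (Set.image_subset_iff.2 hleft) (convex_convexHull 𝕜 _) this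

section Density

variable {d : Type*} [Fintype d] [DecidableEq d]

theorem convex_setOf_isDensity : Convex ℝ {ρ : Matrix d d ℂ | IsDensity ρ} := by
  intro σ hσ τ hτ a b ha hb hab
  refine ⟨(hσ.1.smul ha).add (hτ.1.smul hb), ?_⟩
  rw [trace_add, trace_smul, trace_smul, hσ.2, hτ.2, ← Complex.coe_smul, ← Complex.coe_smul]
  simp only [smul_eq_mul, mul_one]
  exact_mod_cast hab

theorem convexOn_setOf_isDensity {f : Matrix d d ℂ → ℝ}
    (hf : ∀ σ τ : Matrix d d ℂ, IsDensity σ → IsDensity τ → ∀ η : ℝ, 0 ≤ η → η ≤ 1 →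
      f ((η : ℂ) • σ + ((1 - η : ℝ) : ℂ) • τ) ≤ η * f σ + (1 - η) * f τ) :
    ConvexOn ℝ {ρ | IsDensity ρ} f := by
  refine ⟨convex_setOf_isDensity, fun σ hσ τ hτ a b ha hb hab => ?_⟩
  obtain rfl : b = 1 - a := by linarith
  simpa only [Complex.coe_smul, smul_eq_mul] using hf σ τ hσ hτ a ha (by linarith)

end Density

theorem IsDensity.kron {m n : ℕ} {A : Matrix (Fin m) (Fin m) ℂ} {B : Matrix (Fin n) (Fin n) ℂ}
    (hA : IsDensity A) (hB : IsDensity B) : IsDensity (kron A B) :=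
  ⟨hA.1.kronecker hB.1, (trace_kronecker A B).trans (by rw [hA.2, hB.2, mul_one])⟩

theorem proj1_eq_replicateCol_mul_conjTranspose {d : ℕ} (a : H d) :
    proj1 a = replicateCol (Fin 1) a.ofLp * (replicateCol (Fin 1) a.ofLp)ᴴ := by
  rw [conjTranspose_replicateCol]
  exact vecMulVec_eq (Fin 1) _ _

theorem conjTranspose_replicateCol_mul_self {d : ℕ} {a : H d} (ha : ‖a‖ = 1) :
    (replicateCol (Fin 1) a.ofLp)ᴴ * replicateCol (Fin 1) a.ofLp = 1 := by
  rw [conjTranspose_replicateCol, replicateRow_mul_replicateCol, dotProduct_comm,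
    ← EuclideanSpace.inner_eq_star_dotProduct, inner_self_eq_norm_sq_to_K, ha]
  ext i j
  rw [Subsingleton.elim i j]
  simp

theorem isDensity_proj1 {d : ℕ} {a : H d} (ha : ‖a‖ = 1) : IsDensity (proj1 a) := by
  refine ⟨posSemidef_vecMulVec_self_star _, ?_⟩
  rw [proj1_eq_replicateCol_mul_conjTranspose, trace_mul_comm,
    conjTranspose_replicateCol_mul_self ha]
  simp

theorem Matrix.IsHermitian.eq_sum_eigenvalues_smul_proj1 {d : ℕ} {A : Matrix (Fin d) (Fin d) ℂ}
    (hA : A.IsHermitian) : A = ∑ i, hA.eigenvalues i • proj1 (hA.eigenvectorBasis i) := by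
  conv_lhs => rw [hA.spectral_theorem]
  ext j k
  simp [Unitary.conjStarAlgAut_apply, Matrix.mul_apply, diagonal_apply, proj1, Matrix.sum_apply,
    mul_comm, mul_assoc]

def pureStates (d : ℕ) : Set (Matrix (Fin d) (Fin d) ℂ) := proj1 '' Metric.sphere 0 1

def productPureStates (m n : ℕ) : Set (Matrix (Fin m × Fin n) (Fin m × Fin n) ℂ) :=
  Set.image2 kron (pureStates m) (pureStates n)

theorem IsDensity.mem_convexHull_pureStates {d : ℕ} {ρ : Matrix (Fin d) (Fin d) ℂ}
    (hρ : IsDensity ρ) : ρ ∈ convexHull ℝ (pureStates d) := by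
  have hA := hρ.1.isHermitian
  have hsum : ∑ i, hA.eigenvalues i = 1 := by
    have htr := hρ.2
    rw [hA.trace_eq_sum_eigenvalues, ← RCLike.ofReal_sum] at htr
    exact RCLike.ofReal_injective (htr.trans RCLike.ofReal_one.symm)
  rw [hA.eq_sum_eigenvalues_smul_proj1]
  exact (convex_convexHull ℝ _).sum_mem (fun i _ => hρ.1.eigenvalues_nonneg i) hsum
    fun i _ => subset_convexHull ℝ _ ⟨_, by simp, rfl⟩

theorem productPureStates_subset_setOf_isDensity {m n : ℕ} :
    productPureStates m n ⊆ {ρ | IsDensity ρ} := by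
  rintro _ ⟨_, ⟨a, ha, rfl⟩, _, ⟨b, hb, rfl⟩, rfl⟩
  exact (isDensity_proj1 (mem_sphere_zero_iff_norm.1 ha)).kron
    (isDensity_proj1 (mem_sphere_zero_iff_norm.1 hb))

theorem SepDensity.mem_convexHull_productPureStates {m n : ℕ}
    {ρ : Matrix (Fin m × Fin n) (Fin m × Fin n) ℂ} (hsep : SepDensity ρ) (hρ : IsDensity ρ) :
    ρ ∈ convexHull ℝ (productPureStates m n) := by
  obtain ⟨k, ω, ρ₁, ρ₂, hω, hρ₁, hρ₂, rfl⟩ := hsep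
  have hsum : ∑ i, ω i = 1 := by
    have htr := hρ.2
    simp only [trace_sum, trace_smul, ((hρ₁ _).kron (hρ₂ _)).2, smul_eq_mul, mul_one] at htr
    exact_mod_cast htr
  simp only [Complex.coe_smul]
  exact (convex_convexHull ℝ _).sum_mem (fun i _ => hω i) hsum fun i _ =>
    (kroneckerBilinear (R := ℝ)).mem_convexHull_image2 (hρ₁ i).mem_convexHull_pureStates
      (hρ₂ i).mem_convexHull_pureStates

theorem kronR_replicateCol_mul_conjTranspose {m n : ℕ} (a : H m) (b : H n) :
    kronR (replicateCol (Fin 1) a.ofLp) (replicateCol (Fin 1) b.ofLp) *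
      (kronR (replicateCol (Fin 1) a.ofLp) (replicateCol (Fin 1) b.ofLp))ᴴ =
      kron (proj1 a) (proj1 b) := by
  rw [proj1_eq_replicateCol_mul_conjTranspose, proj1_eq_replicateCol_mul_conjTranspose]
  exact (congrArg _ (conjTranspose_kronecker _ _)).trans (mul_kronecker_mul _ _ _ _).symm

theorem proj_stdVec_one : proj (stdVec fun _ : Fin 1 => (1 : ℝ)) = 1 := by
  ext p q
  obtain rfl := Subsingleton.elim p q
  simp [proj, stdVec, Subsingleton.elim p.1 p.2]

theorem norm_stdVec_one : ‖stdVec fun _ : Fin 1 => (1 : ℝ)‖ = 1 := by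
  simp [EuclideanSpace.norm_eq, stdVec, Fintype.sum_prod_type]

theorem mixed_measure_vanishes_on_separable_general
    (E : ∀ m n : ℕ, Matrix (Fin m × Fin n) (Fin m × Fin n) ℂ → ℝ)
    (hM1 : ∀ (m n : ℕ), (∀ ρ, IsDensity ρ → 0 ≤ E m n ρ) ∧ Continuous (E m n))
    (hM3 : ∀ (m n m' n' : ℕ) (J₁ : Matrix (Fin m') (Fin m) ℂ)
      (J₂ : Matrix (Fin n') (Fin n) ℂ), J₁ᴴ * J₁ = 1 → J₂ᴴ * J₂ = 1 →
      ∀ ρ, E m' n' (kronR J₁ J₂ * ρ * (kronR J₁ J₂)ᴴ) = E m n ρ)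
    (hM4 : ∀ (m n k : ℕ) (ψ : Fin k → HT m n), (∀ i, ‖ψ i‖ = 1) →
      (∀ i j, i ≠ j → SchmidtOrthogonal (ψ i) (ψ j)) →
      ∀ lam : Fin k → ℂ, (∑ i, ‖lam i‖ ^ 2) = 1 →
      E m n (proj (∑ i, lam i • ψ i))
        = E k k (proj (stdVec fun i => ‖lam i‖ ^ 2))
          + ∑ i, ‖lam i‖ ^ 2 * E m n (proj (ψ i)))
    (hM5 : ∀ (m n : ℕ) (σ τ : Matrix (Fin m × Fin n) (Fin m × Fin n) ℂ),
      IsDensity σ → IsDensity τ → ∀ η : ℝ, 0 ≤ η → η ≤ 1 →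
      E m n ((η : ℂ) • σ + ((1 - η : ℝ) : ℂ) • τ)
        ≤ η * E m n σ + (1 - η) * E m n τ) :
    ∀ (m n : ℕ) (ρ : Matrix (Fin m × Fin n) (Fin m × Fin n) ℂ),
      IsDensity ρ → SepDensity ρ → E m n ρ = 0 := by
  intro m n ρ hρ hsep
  have hunit : E 1 1 1 = 0 := by
    have h := hM4 1 1 1 (fun _ => stdVec fun _ => 1) (fun _ => norm_stdVec_one)
      (fun i j hij => (hij (Subsingleton.elim i j)).elim) (fun _ => 1) (by simp)
    simp only [Fin.sum_univ_one, one_smul, norm_one, one_pow, one_mul, proj_stdVec_one] at h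
    linarith
  have hprod : ∀ σ ∈ productPureStates m n, E m n σ ≤ 0 := by
    rintro _ ⟨_, ⟨a, ha, rfl⟩, _, ⟨b, hb, rfl⟩, rfl⟩
    rw [mem_sphere_zero_iff_norm] at ha hb
    have h := hM3 1 1 m n _ _ (conjTranspose_replicateCol_mul_self ha)
      (conjTranspose_replicateCol_mul_self hb) 1
    rw [Matrix.mul_one, kronR_replicateCol_mul_conjTranspose, hunit] at h
    exact h.le
  obtain ⟨σ, hσ, hle⟩ := (convexOn_setOf_isDensity (hM5 m n)).exists_ge_of_mem_convexHull
    productPureStates_subset_setOf_isDensity (hsep.mem_convexHull_productPureStates hρ)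
  exact le_antisymm (hle.trans (hprod σ hσ)) ((hM1 m n).1 ρ hρ)

/-- An entanglement measure on mixed states satisfying (M1)-(M5) vanishes on all
separable states. -/
theorem mixed_measure_vanishes_on_separable
    (E : ∀ m n : ℕ, Matrix (Fin m × Fin n) (Fin m × Fin n) ℂ → ℝ)
    (hM1 : ∀ (m n : ℕ), (∀ ρ, IsDensity ρ → 0 ≤ E m n ρ) ∧ Continuous (E m n))
    (hM2 : ∀ (m n : ℕ) (U : Matrix (Fin m) (Fin m) ℂ) (V : Matrix (Fin n) (Fin n) ℂ),
      U ∈ Matrix.unitaryGroup (Fin m) ℂ → V ∈ Matrix.unitaryGroup (Fin n) ℂ →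
      ∀ ρ, E m n (kron U V * ρ * (kron U V)ᴴ) = E m n ρ)
    (hM3 : ∀ (m n m' n' : ℕ) (J₁ : Matrix (Fin m') (Fin m) ℂ)
      (J₂ : Matrix (Fin n') (Fin n) ℂ), J₁ᴴ * J₁ = 1 → J₂ᴴ * J₂ = 1 →
      ∀ ρ, E m' n' (kronR J₁ J₂ * ρ * (kronR J₁ J₂)ᴴ) = E m n ρ)
    (hM4 : ∀ (m n k : ℕ) (ψ : Fin k → HT m n), (∀ i, ‖ψ i‖ = 1) →
      (∀ i j, i ≠ j → SchmidtOrthogonal (ψ i) (ψ j)) →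
      ∀ lam : Fin k → ℂ, (∑ i, ‖lam i‖ ^ 2) = 1 →
      E m n (proj (∑ i, lam i • ψ i))
        = E k k (proj (stdVec fun i => ‖lam i‖ ^ 2))
          + ∑ i, ‖lam i‖ ^ 2 * E m n (proj (ψ i)))
    (hM5 : ∀ (m n : ℕ) (σ τ : Matrix (Fin m × Fin n) (Fin m × Fin n) ℂ),
      IsDensity σ → IsDensity τ → ∀ η : ℝ, 0 ≤ η → η ≤ 1 →
      E m n ((η : ℂ) • σ + ((1 - η : ℝ) : ℂ) • τ)
        ≤ η * E m n σ + (1 - η) * E m n τ) :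
    ∀ (m n : ℕ) (ρ : Matrix (Fin m × Fin n) (Fin m × Fin n) ℂ),
      IsDensity ρ → SepDensity ρ → E m n ρ = 0 :=
  mixed_measure_vanishes_on_separable_general E hM1 hM3 hM4 hM5

end
end
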